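/- arXiv:2412.02175 — 3 statements merged into one kernel-verified Lean document; each statement's English description precedes it below -/
import Mathlib

section
/- For the quadratic loss ℓ(B) = ‖y - Bs‖² on symmetric matrices B ∈ 𝕊^d, with ‖s‖ ≤ D, the gradient satisfies ‖∇ℓ(B)‖_* ≤ 2D √(ℓ(B)), where ‖·‖_* is the nuclear norm and ∇ℓ(B) = -(y - Bs)sᵀ - s(y - Bs)ᵀ. -/
open Matrix

/-- The Euclidean norm of a vector in `ℝ^d`. -/
noncomputable def euclNorm {d : ℕ} (v : Fin d → ℝ) : ℝ := Real.sqrt (∑ i, v i ^ 2)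

/-- The nuclear norm of a matrix: the sum of its singular values. -/
noncomputable def nuclearNorm {d : ℕ} (M : Matrix (Fin d) (Fin d) ℝ) : ℝ :=
  ∑ i, Real.sqrt ((Matrix.isHermitian_conjTranspose_mul_self M).eigenvalues i)

/-!
The gradient is `-(r sᵀ + s rᵀ)` with `r = y - B s`. For `P = u vᵀ + v uᵀ` the matrix `Pᴴ P` is
positive semidefinite of rank at most two, so its nonzero eigenvalues `λ₁, λ₂` are determined by
`tr (Pᴴ P)` and `tr ((Pᴴ P)²)`, and `(√λ₁ + √λ₂)² = λ₁ + λ₂ + √(2 ((λ₁ + λ₂)² - (λ₁² + λ₂²)))`.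
Evaluating the traces, the discriminant is `(2 (‖u‖²‖v‖² - ⟪u, v⟫²))²`, a perfect square whose root
is nonnegative by Cauchy–Schwarz; hence `‖P‖_* = 2 ‖u‖ ‖v‖` exactly, and `‖s‖ ≤ D` finishes.
-/

theorem Fintype.exists_sum_comp_eq_add_of_card_ne_zero_le_two {ι α β : Type*} [Fintype ι]
    [Zero α] [AddCommMonoid β] (f : ι → α) (hf : Nat.card {i // f i ≠ 0} ≤ 2) :
    ∃ a ∈ insert 0 (Set.range f), ∃ b ∈ insert 0 (Set.range f),
      ∀ g : α → β, g 0 = 0 → ∑ i, g (f i) = g a + g b := by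
  classical
  set T := Finset.univ.filter (f · ≠ 0)
  have hsum (g : α → β) (hg : g 0 = 0) : ∑ i, g (f i) = ∑ i ∈ T, g (f i) :=
    (Finset.sum_subset (Finset.subset_univ T) fun i _ hi => by simp_all [T]).symm
  have hT : T.card ≤ 2 := by rwa [Nat.card_eq_fintype_card, Fintype.card_subtype] at hf
  interval_cases h : T.card
  · refine ⟨0, by simp, 0, by simp, fun g hg => ?_⟩
    simp [hsum g hg, Finset.card_eq_zero.1 h, hg]
  · obtain ⟨i, hi⟩ := Finset.card_eq_one.1 h
    refine ⟨f i, by simp, 0, by simp, fun g hg => ?_⟩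
    simp [hsum g hg, hi, hg]
  · obtain ⟨i, j, hij, hi⟩ := Finset.card_eq_two.1 h
    refine ⟨f i, by simp, f j, by simp, fun g hg => ?_⟩
    rw [hsum g hg, hi, Finset.sum_pair hij]

theorem Matrix.trace_unitary_conj {𝕜 n : Type*} [RCLike 𝕜] [Fintype n] [DecidableEq n]
    (U : unitaryGroup n 𝕜) (X : Matrix n n 𝕜) :
    trace ((U : Matrix n n 𝕜) * X * star (U : Matrix n n 𝕜)) = trace X := by
  rw [trace_mul_cycle, UnitaryGroup.star_mul_self, one_mul]

theorem Matrix.IsHermitian.trace_mul_self_eq_sum_sq_eigenvalues {𝕜 n : Type*} [RCLike 𝕜]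
    [Fintype n] [DecidableEq n] {A : Matrix n n 𝕜} (hA : A.IsHermitian) :
    (A * A).trace = ∑ i, ((hA.eigenvalues i ^ 2 : ℝ) : 𝕜) := by
  conv_lhs => rw [hA.spectral_theorem, ← map_mul, Unitary.conjStarAlgAut_apply,
    trace_unitary_conj, diagonal_mul_diagonal, trace_diagonal]
  simp [sq]

theorem Real.sq_sqrt_add_sqrt {a b : ℝ} (ha : 0 ≤ a) (hb : 0 ≤ b) :
    (√a + √b) ^ 2 = (a + b) + √(2 * ((a + b) ^ 2 - (a ^ 2 + b ^ 2))) := by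
  have h : 2 * ((a + b) ^ 2 - (a ^ 2 + b ^ 2)) = (2 * √a * √b) ^ 2 := by
    rw [mul_pow, mul_pow, Real.sq_sqrt ha, Real.sq_sqrt hb]; ring
  rw [h, Real.sqrt_sq (by positivity), add_sq, Real.sq_sqrt ha, Real.sq_sqrt hb]
  ring

theorem Matrix.PosSemidef.sq_sum_sqrt_eigenvalues_of_rank_le_two {n : Type*} [Fintype n]
    [DecidableEq n] {A : Matrix n n ℝ} (hA : A.PosSemidef) (hrank : A.rank ≤ 2) :
    (∑ i, √(hA.1.eigenvalues i)) ^ 2 = A.trace + √(2 * (A.trace ^ 2 - (A * A).trace)) := by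
  have hcard : Nat.card {i // hA.1.eigenvalues i ≠ 0} ≤ 2 := by
    rwa [Nat.card_eq_fintype_card, ← hA.1.rank_eq_card_non_zero_eigs]
  obtain ⟨a, ha, b, hb, hsum⟩ :=
    Fintype.exists_sum_comp_eq_add_of_card_ne_zero_le_two (β := ℝ) _ hcard
  have hnonneg {x : ℝ} (hx : x ∈ insert 0 (Set.range hA.1.eigenvalues)) : 0 ≤ x := by
    rcases hx with rfl | ⟨i, rfl⟩
    exacts [le_rfl, hA.eigenvalues_nonneg i]
  rw [hA.1.trace_eq_sum_eigenvalues, hA.1.trace_mul_self_eq_sum_sq_eigenvalues]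
  simp only [RCLike.ofReal_real_eq_id, id]
  rw [hsum _ Real.sqrt_zero, hsum (fun x => x) rfl, hsum (· ^ 2) (zero_pow two_ne_zero)]
  exact Real.sq_sqrt_add_sqrt (hnonneg ha) (hnonneg hb)

theorem Matrix.rank_vecMulVec_add_vecMulVec_le {m n K : Type*} [Fintype n] [Field K]
    (u w : m → K) (v x : n → K) : (vecMulVec u v + vecMulVec w x).rank ≤ 2 := by
  have h : vecMulVec u v + vecMulVec w x = (of ![u, w])ᵀ * of ![v, x] := by
    ext i j
    simp [mul_apply, Fin.sum_univ_two, vecMulVec_apply]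
  rw [h]
  exact (rank_mul_le_left _ _).trans ((rank_le_card_width _).trans_eq (Fintype.card_fin 2))

section SymmetrizedOuterProduct

variable {n : Type*} [Fintype n] (u v : n → ℝ)

theorem trace_sq_vecMulVec_add_vecMulVec :
    ((vecMulVec u v + vecMulVec v u) * (vecMulVec u v + vecMulVec v u)).trace
      = 2 * (u ⬝ᵥ v) ^ 2 + 2 * ((u ⬝ᵥ u) * (v ⬝ᵥ v)) := by
  simp only [add_mul, mul_add, vecMulVec_mul_vecMulVec, trace_add, trace_vecMulVec,
    dotProduct_smul, smul_eq_mul, dotProduct_comm v u]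
  ring

theorem trace_pow_four_vecMulVec_add_vecMulVec :
    ((vecMulVec u v + vecMulVec v u) * (vecMulVec u v + vecMulVec v u) *
      ((vecMulVec u v + vecMulVec v u) * (vecMulVec u v + vecMulVec v u))).trace
      = 2 * (u ⬝ᵥ v) ^ 4 + 12 * ((u ⬝ᵥ u) * (v ⬝ᵥ v)) * (u ⬝ᵥ v) ^ 2
        + 2 * ((u ⬝ᵥ u) * (v ⬝ᵥ v)) ^ 2 := by
  simp only [add_mul, mul_add, vecMulVec_mul_vecMulVec, vecMulVec_smul, smul_mul_assoc,
    mul_smul_comm, smul_smul, trace_add, trace_smul, trace_vecMulVec, smul_eq_mul,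
    dotProduct_comm v u]
  ring

theorem sq_dotProduct_le_dotProduct_self_mul : (u ⬝ᵥ v) ^ 2 ≤ (u ⬝ᵥ u) * (v ⬝ᵥ v) := by
  simpa only [dotProduct, sq] using Finset.sum_mul_sq_le_sq_mul_sq Finset.univ u v

end SymmetrizedOuterProduct

theorem euclNorm_nonneg {d : ℕ} (v : Fin d → ℝ) : 0 ≤ euclNorm v :=
  Real.sqrt_nonneg _

theorem euclNorm_sq {d : ℕ} (v : Fin d → ℝ) : euclNorm v ^ 2 = v ⬝ᵥ v := by
  rw [euclNorm, Real.sq_sqrt (by positivity)]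
  simp only [dotProduct, sq]

theorem nuclearNorm_nonneg {d : ℕ} (M : Matrix (Fin d) (Fin d) ℝ) : 0 ≤ nuclearNorm M :=
  Finset.sum_nonneg fun _ _ => Real.sqrt_nonneg _

theorem nuclearNorm_neg {d : ℕ} (M : Matrix (Fin d) (Fin d) ℝ) :
    nuclearNorm (-M) = nuclearNorm M := by
  simp only [nuclearNorm, conjTranspose_neg, neg_mul_neg]

theorem sq_nuclearNorm_of_rank_le_two {d : ℕ} {M : Matrix (Fin d) (Fin d) ℝ} (hM : M.rank ≤ 2) :
    nuclearNorm M ^ 2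
      = (Mᴴ * M).trace + √(2 * ((Mᴴ * M).trace ^ 2 - (Mᴴ * M * (Mᴴ * M)).trace)) :=
  (posSemidef_conjTranspose_mul_self M).sq_sum_sqrt_eigenvalues_of_rank_le_two
    (by rwa [rank_conjTranspose_mul_self])

theorem sq_nuclearNorm_vecMulVec_add_vecMulVec {d : ℕ} (u v : Fin d → ℝ) :
    nuclearNorm (vecMulVec u v + vecMulVec v u) ^ 2 = 4 * ((u ⬝ᵥ u) * (v ⬝ᵥ v)) := by
  have hsymm : (vecMulVec u v + vecMulVec v u)ᴴ = vecMulVec u v + vecMulVec v u := by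
    rw [conjTranspose_eq_transpose_of_trivial, transpose_add, transpose_vecMulVec,
      transpose_vecMulVec, add_comm]
  rw [sq_nuclearNorm_of_rank_le_two (rank_vecMulVec_add_vecMulVec_le u v v u), hsymm,
    trace_sq_vecMulVec_add_vecMulVec, trace_pow_four_vecMulVec_add_vecMulVec]
  have hCS := sq_dotProduct_le_dotProduct_self_mul u v
  rw [show 2 * ((2 * (u ⬝ᵥ v) ^ 2 + 2 * ((u ⬝ᵥ u) * (v ⬝ᵥ v))) ^ 2 - _)
      = (2 * ((u ⬝ᵥ u) * (v ⬝ᵥ v) - (u ⬝ᵥ v) ^ 2)) ^ 2 by ring, Real.sqrt_sq (by linarith)]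
  ring

theorem nuclearNorm_vecMulVec_add_vecMulVec {d : ℕ} (u v : Fin d → ℝ) :
    nuclearNorm (vecMulVec u v + vecMulVec v u) = 2 * euclNorm u * euclNorm v := by
  have hnorm : 0 ≤ 2 * euclNorm u * euclNorm v :=
    mul_nonneg (mul_nonneg zero_le_two (euclNorm_nonneg u)) (euclNorm_nonneg v)
  rw [← pow_left_inj₀ (nuclearNorm_nonneg _) hnorm two_ne_zero,
    sq_nuclearNorm_vecMulVec_add_vecMulVec, mul_pow, mul_pow, euclNorm_sq, euclNorm_sq]
  ring

theorem stmt6_general {d : ℕ} (D : ℝ) (y s : Fin d → ℝ) (B : Matrix (Fin d) (Fin d) ℝ)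
    (hs : euclNorm s ≤ D) :
    nuclearNorm (-(Matrix.vecMulVec (y - B.mulVec s) s) - Matrix.vecMulVec s (y - B.mulVec s))
      ≤ 2 * D * Real.sqrt (∑ i, ((y - B.mulVec s) i) ^ 2) := by
  rw [← neg_add', nuclearNorm_neg, nuclearNorm_vecMulVec_add_vecMulVec]
  have hr := euclNorm_nonneg (y - B.mulVec s)
  calc 2 * euclNorm (y - B.mulVec s) * euclNorm s
      ≤ 2 * euclNorm (y - B.mulVec s) * D := by gcongr
    _ = 2 * D * euclNorm (y - B.mulVec s) := by ring

/-- Lemma 4.4: self-bounding property of the quadratic loss `ℓ(B) = ‖y - Bs‖²`. -/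
theorem stmt6 {d : ℕ} (D : ℝ) (y s : Fin d → ℝ) (B : Matrix (Fin d) (Fin d) ℝ)
    (hB : Bᵀ = B) (hs : euclNorm s ≤ D) :
    nuclearNorm (-(Matrix.vecMulVec (y - B.mulVec s) s) - Matrix.vecMulVec s (y - B.mulVec s))
      ≤ 2 * D * Real.sqrt (∑ i, ((y - B.mulVec s) i) ^ 2) :=
  stmt6_general D y s B hs
end

section
/- Let Z = {B ∈ 𝕊^d : ‖B‖_op ≤ L₁}. Suppose G, G̃, S ∈ 𝕊^d, B₀ = W/γ for some γ > 1, G̃ = G + max{0, -⟨G, B₀⟩} S, and ⟨S, W - B⟩ ≥ γ - 1 for all B ∈ Z. Then for every B ∈ Z: ⟨G̃, W - B⟩ ≥ ⟨G, B₀ - B⟩. -/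
open Matrix

/-- Frobenius inner product of two real matrices. -/
def frobInner {d : ℕ} (X Y : Matrix (Fin d) (Fin d) ℝ) : ℝ := ∑ i, ∑ j, X i j * Y i j

/-- `‖M‖_op ≤ c` expressed via the Euclidean norm. -/
def opNormBound {d : ℕ} (M : Matrix (Fin d) (Fin d) ℝ) (c : ℝ) : Prop :=
  ∀ x : Fin d → ℝ, euclNorm (M.mulVec x) ≤ c * euclNorm x

section FrobInner

variable {d : ℕ}

lemma frobInner_add_left (X Y Z : Matrix (Fin d) (Fin d) ℝ) :
    frobInner (X + Y) Z = frobInner X Z + frobInner Y Z := by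
  simp only [frobInner, Matrix.add_apply, add_mul, Finset.sum_add_distrib]

lemma frobInner_smul_left (c : ℝ) (X Z : Matrix (Fin d) (Fin d) ℝ) :
    frobInner (c • X) Z = c * frobInner X Z := by
  simp only [frobInner, Matrix.smul_apply, smul_eq_mul, Finset.mul_sum, mul_assoc]

lemma frobInner_sub_right (X Y Z : Matrix (Fin d) (Fin d) ℝ) :
    frobInner X (Y - Z) = frobInner X Y - frobInner X Z := by
  simp only [frobInner, Matrix.sub_apply, mul_sub, Finset.sum_sub_distrib]

lemma frobInner_smul_right (c : ℝ) (X Z : Matrix (Fin d) (Fin d) ℝ) :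
    frobInner X (c • Z) = c * frobInner X Z := by
  simp only [frobInner, Matrix.smul_apply, smul_eq_mul, Finset.mul_sum, mul_left_comm]

lemma frobInner_sub_eq_sub_smul_inv_add {γ : ℝ} (hγ : γ ≠ 0)
    (G W B : Matrix (Fin d) (Fin d) ℝ) :
    frobInner G (W - B) = frobInner G (γ⁻¹ • W - B) + (γ - 1) * frobInner G (γ⁻¹ • W) := by
  simp only [frobInner_sub_right, frobInner_smul_right]
  field_simp
  ring

end FrobInner

/-- The surrogate linear loss dominates the original regret. -/
theorem stmt13 {d : ℕ} (L₁ γ : ℝ) (hγ : 1 < γ)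
    (W G S : Matrix (Fin d) (Fin d) ℝ)
    (hsep : ∀ B : Matrix (Fin d) (Fin d) ℝ, Bᵀ = B → opNormBound B L₁ →
      frobInner S (W - B) ≥ γ - 1) :
    ∀ B : Matrix (Fin d) (Fin d) ℝ, Bᵀ = B → opNormBound B L₁ →
      frobInner (G + max 0 (-(frobInner G (γ⁻¹ • W))) • S) (W - B)
        ≥ frobInner G (γ⁻¹ • W - B) := by
  intro B hB hBop
  set t := frobInner G (γ⁻¹ • W)
  set m := max 0 (-t)
  rw [frobInner_add_left, frobInner_smul_left,
    frobInner_sub_eq_sub_smul_inv_add (zero_lt_one.trans hγ).ne' G W B]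
  -- the correction `m • S` pays for the possibly negative term `(γ - 1) * t`
  have hS : m * (γ - 1) ≤ m * frobInner S (W - B) :=
    mul_le_mul_of_nonneg_left (hsep B hB hBop) (le_max_left 0 (-t))
  have hmt : 0 ≤ (γ - 1) * (t + m) :=
    mul_nonneg (sub_nonneg.2 hγ.le) (neg_le_iff_add_nonneg'.1 (le_max_right 0 (-t)))
  linarith
end

section
/- Let A ∈ 𝕊^d with λ_min(A) < 0, let λ̂ ≤ λ_min(A) and v̂ a unit vector with ‖(A - λ̂I)v̂‖ ≤ δ/(2D). Suppose Δ̃ with ‖Δ̃‖ < D satisfies ‖(A - λ̂I)Δ̃ + b‖ ≤ δ/2, and α ∈ ℝ with |α| ≤ D is chosen so that ‖Δ̃ + αv̂‖ = D. Then Δ̂ = Δ̃ + αv̂ satisfies min over v ∈ N_K(Δ̂) of ‖AΔ̂ + b + v‖ ≤ δ, where K is the ball of radius D. -/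
open scoped RealInnerProductSpace

/-! Take `v = -λ̂ Δ̂`, a normal vector to the ball at `Δ̂` because `λ̂ < 0` and `‖Δ̂‖ = D`. Then
`AΔ̂ + b + v = ((A - λ̂)Δ̃ + b) + α (A - λ̂)v̂`, and both summands have norm at most `δ / 2`. -/

theorem inner_smul_sub_nonpos_of_norm_le {E : Type*} [NormedAddCommGroup E] [InnerProductSpace ℝ E]
    {x u : E} {r c : ℝ} (hc : 0 ≤ c) (hx : ‖x‖ = r) (hu : ‖u‖ ≤ r) :
    ⟪c • x, u - x⟫ ≤ 0 := by
  have hxu : ⟪x, u⟫ ≤ ‖x‖ * ‖x‖ :=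
    (real_inner_le_norm x u).trans (mul_le_mul_of_nonneg_left (hx ▸ hu) (norm_nonneg x))
  rw [real_inner_smul_left, inner_sub_right, real_inner_self_eq_norm_mul_norm]
  exact mul_nonpos_of_nonneg_of_nonpos hc (sub_nonpos.mpr hxu)

theorem norm_apply_add_smul_add_sub_smul_le {E : Type*} [SeminormedAddCommGroup E]
    [NormedSpace ℝ E] (A : E →L[ℝ] E) (b x v : E) (lam α : ℝ) :
    ‖A (x + α • v) + b + (-lam) • (x + α • v)‖ ≤ ‖(A x - lam • x) + b‖ + |α| * ‖A v - lam • v‖ := by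
  have hsplit : A (x + α • v) + b + (-lam) • (x + α • v)
      = ((A x - lam • x) + b) + α • (A v - lam • v) := by
    rw [map_add, map_smul]
    module
  rw [hsplit, ← Real.norm_eq_abs, ← norm_smul]
  exact norm_add_le _ _

theorem stmt16_general {d : ℕ} (A : EuclideanSpace ℝ (Fin d) →L[ℝ] EuclideanSpace ℝ (Fin d))
    (b : EuclideanSpace ℝ (Fin d)) (D δ lamh : ℝ) (hD : 0 < D)
    (hlamneg : lamh < 0)
    (vh : EuclideanSpace ℝ (Fin d))
    (hvh_approx : ‖A vh - lamh • vh‖ ≤ δ / (2 * D))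
    (Δt : EuclideanSpace ℝ (Fin d))
    (hΔt_approx : ‖(A Δt - lamh • Δt) + b‖ ≤ δ / 2)
    (α : ℝ) (hα : |α| ≤ D) (hbd : ‖Δt + α • vh‖ = D) :
    ∃ v : EuclideanSpace ℝ (Fin d),
      (∀ u : EuclideanSpace ℝ (Fin d), ‖u‖ ≤ D → ⟪v, u - (Δt + α • vh)⟫ ≤ 0) ∧
      ‖A (Δt + α • vh) + b + v‖ ≤ δ := by
  refine ⟨(-lamh) • (Δt + α • vh),
    fun u hu => inner_smul_sub_nonpos_of_norm_le (by linarith) hbd hu, ?_⟩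
  calc ‖A (Δt + α • vh) + b + (-lamh) • (Δt + α • vh)‖
      ≤ ‖(A Δt - lamh • Δt) + b‖ + |α| * ‖A vh - lamh • vh‖ :=
        norm_apply_add_smul_add_sub_smul_le A b Δt vh lamh α
    _ ≤ δ / 2 + D * (δ / (2 * D)) := by gcongr
    _ = δ := by field_simp; ring

/-- Correctness of the boundary correction in the trust-region solver. -/
theorem stmt16 {d : ℕ} (A : EuclideanSpace ℝ (Fin d) →L[ℝ] EuclideanSpace ℝ (Fin d))
    (hA : ∀ x y : EuclideanSpace ℝ (Fin d), ⟪A x, y⟫ = ⟪x, A y⟫)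
    (b : EuclideanSpace ℝ (Fin d)) (D δ lamh : ℝ) (hD : 0 < D) (hδ : 0 < δ)
    (hlamneg : lamh < 0)
    (hmin_neg : ∃ x : EuclideanSpace ℝ (Fin d), ‖x‖ = 1 ∧ ⟪A x, x⟫ < 0)
    (hlam_le : ∀ x : EuclideanSpace ℝ (Fin d), ⟪A x, x⟫ ≥ lamh * ‖x‖ ^ 2)
    (vh : EuclideanSpace ℝ (Fin d)) (hvh : ‖vh‖ = 1)
    (hvh_approx : ‖A vh - lamh • vh‖ ≤ δ / (2 * D))
    (Δt : EuclideanSpace ℝ (Fin d)) (hΔt : ‖Δt‖ < D)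
    (hΔt_approx : ‖(A Δt - lamh • Δt) + b‖ ≤ δ / 2)
    (α : ℝ) (hα : |α| ≤ D) (hbd : ‖Δt + α • vh‖ = D) :
    ∃ v : EuclideanSpace ℝ (Fin d),
      (∀ u : EuclideanSpace ℝ (Fin d), ‖u‖ ≤ D → ⟪v, u - (Δt + α • vh)⟫ ≤ 0) ∧
      ‖A (Δt + α • vh) + b + v‖ ≤ δ :=
  stmt16_general A b D δ lamh hD hlamneg vh hvh_approx Δt hΔt_approx α hα hbd
end
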